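/- If U is a partial n-dandelion obtained from the cycle C_n by appending p_i ≥ 1 pendant leaves to each vertex in a nonempty subset V' of size k of the cycle's vertices, then mr^-(U) = 2k + 2·match(U - V'). -/

import Mathlib

open Matrix SimpleGraph

attribute [local instance] Classical.propDecidable

/-- The set of real skew-symmetric matrices whose off-diagonal zero-nonzero
pattern is described by the graph `G`. -/
def IsSkewRep {V : Type*} [Fintype V] (G : SimpleGraph V) (A : Matrix V V ℝ) : Prop :=
  Aᵀ = -A ∧ ∀ i j, i ≠ j → (A i j ≠ 0 ↔ G.Adj i j)

/-- The minimum skew rank of a simple graph. -/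
noncomputable def minSkewRank {V : Type*} [Fintype V] (G : SimpleGraph V) : ℕ :=
  sInf {r | ∃ A : Matrix V V ℝ, IsSkewRep G A ∧ A.rank = r}

/-- The maximum skew rank of a simple graph. -/
noncomputable def maxSkewRank {V : Type*} [Fintype V] (G : SimpleGraph V) : ℕ :=
  sSup {r | ∃ A : Matrix V V ℝ, IsSkewRep G A ∧ A.rank = r}

/-- The matching number of a simple graph. -/
noncomputable def matchNum {V : Type*} [Fintype V] (G : SimpleGraph V) : ℕ :=
  sSup {n | ∃ M : G.Subgraph, M.IsMatching ∧ M.edgeSet.ncard = n}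

/-- The partial `n`-dandelion obtained from the cycle `Cₙ` by attaching `p i`
pendant leaves to the cycle vertex `f i`, for each `i : Fin k`. -/
def dandelion (n k : ℕ) (f : Fin k → Fin n) (p : Fin k → ℕ) :
    SimpleGraph ((Fin n) ⊕ (Σ i : Fin k, Fin (p i))) :=
  SimpleGraph.fromRel (fun x y =>
    match x, y with
    | Sum.inl a, Sum.inl b => (cycleGraph n).Adj a b
    | Sum.inl a, Sum.inr ⟨i, _⟩ => a = f i
    | _, _ => False)

/-!
Each vertex `c ∈ V'` carries a leaf `l`, and in any skew representation `A` of `U` the row and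
the column of `l` are multiples of the standard basis vector at `c`. Eliminating with them shows
`rank A = 2k + rank A[U - V']`. The graph `U - V'` is a forest (the cycle minus at least one
vertex, together with isolated leaves), and for a skew representation of a forest the same
elimination at the neighbour `c` of a leaf, combined with `match F = match (F - c) + 1`, gives
`rank = 2 · match` by induction. So every skew representation of `U` has rank
`2k + 2 · match (U - V')`, and in particular so has one of minimum rank.
-/

theorem Matrix.rank_eq_ncard_compl_add_rank_submatrix {m n K : Type*} [Fintype m] [Fintype n]
    [DecidableEq n] [Field K] (M : Matrix m n K) (S : Set n) [Fintype S]
    (h : ∀ x ∉ S, Pi.single x 1 ∈ Submodule.span K (Set.range M.row)) :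
    M.rank = Sᶜ.ncard + (M.submatrix id ((↑) : S → n)).rank := by
  set π := LinearMap.funLeft K K ((↑) : S → n)
  set W := Submodule.span K (Set.range M.row)
  have hker : LinearMap.ker π ≤ W := by
    intro v hv
    rw [pi_eq_sum_univ' v]
    refine Submodule.sum_mem _ fun x _ => ?_
    by_cases hx : x ∈ S
    · simp [show v x = 0 from congrFun hv ⟨x, hx⟩]
    · exact W.smul_mem _ (h x hx)
  have hkerπ : Module.finrank K (LinearMap.ker π) = Sᶜ.ncard := by
    have hπ := π.finrank_range_add_finrank_ker
    rw [LinearMap.range_eq_top.mpr (LinearMap.funLeft_surjective_of_injective _ _ _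
      Subtype.val_injective), finrank_top, Module.finrank_fintype_fun_eq_card,
      Module.finrank_fintype_fun_eq_card, ← Nat.card_eq_fintype_card,
      ← Nat.card_eq_fintype_card, Nat.card_coe_set_eq, ← Set.ncard_add_ncard_compl S] at hπ
    omega
  have hrows : Submodule.span K (Set.range (M.submatrix id ((↑) : S → n)).row) = W.map π := by
    rw [Submodule.map_span, ← Set.range_comp]
    rfl
  have hW := (π.domRestrict W).finrank_range_add_finrank_ker
  rw [LinearMap.range_domRestrict, LinearMap.ker_domRestrict,
    (Submodule.comapSubtypeEquivOfLe hker).finrank_eq, hkerπ] at hW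
  rw [rank_eq_finrank_span_row, rank_eq_finrank_span_row, hrows]
  change Module.finrank K W = _
  omega

lemma Set.ncard_compl_setOf_forall_ne {ι β : Type*} {r : ι → β} (hr : Function.Injective r) :
    {x | ∀ i, x ≠ r i}ᶜ.ncard = Nat.card ι := by
  have : {x | ∀ i, x ≠ r i}ᶜ = Set.range r := by
    ext
    simp [eq_comm]
  rw [this, Set.ncard_range_of_injective hr]

section SkewRep

variable {V : Type*} [Fintype V] {G : SimpleGraph V} {A : Matrix V V ℝ}

lemma IsSkewRep.apply_swap (hA : IsSkewRep G A) (i j : V) : A j i = -A i j := by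
  simpa using congrFun (congrFun hA.1 i) j

lemma IsSkewRep.apply_self (hA : IsSkewRep G A) (i : V) : A i i = 0 := by
  linarith [hA.apply_swap i i]

lemma IsSkewRep.apply_eq_zero (hA : IsSkewRep G A) {i j : V} (hij : i ≠ j) (h : ¬G.Adj i j) :
    A i j = 0 :=
  not_not.mp <| mt (hA.2 i j hij).1 h

lemma IsSkewRep.apply_ne_zero (hA : IsSkewRep G A) {i j : V} (h : G.Adj i j) : A i j ≠ 0 :=
  (hA.2 i j h.ne).2 h

lemma IsSkewRep.transpose (hA : IsSkewRep G A) : IsSkewRep G Aᵀ := by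
  refine ⟨by rw [transpose_transpose, hA.1, neg_neg], fun i j hij => ?_⟩
  rw [transpose_apply, hA.apply_swap, neg_ne_zero]
  exact hA.2 i j hij

lemma IsSkewRep.induce (hA : IsSkewRep G A) (s : Set V) [Fintype s] :
    IsSkewRep (G.induce s) (A.submatrix (↑) (↑)) :=
  ⟨by rw [transpose_submatrix, hA.1]; rfl,
    fun i j hij => hA.2 i j (Subtype.coe_ne_coe.mpr hij)⟩

lemma IsSkewRep.eq_zero_of_eq_bot (hA : IsSkewRep G A) (hG : G = ⊥) : A = 0 := by
  ext i j
  rcases eq_or_ne i j with rfl | hij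
  · exact hA.apply_self i
  · exact hA.apply_eq_zero hij (by simp [hG])

lemma IsSkewRep.row_eq_single_of_pendant (hA : IsSkewRep G A) {l c : V}
    (hl : ∀ y, G.Adj l y → y = c) : A.row l = Pi.single c (A l c) := by
  funext x
  rcases eq_or_ne x c with rfl | hxc
  · simp
  rw [Pi.single_eq_of_ne hxc]
  rcases eq_or_ne l x with rfl | hlx
  · exact hA.apply_self l
  · exact hA.apply_eq_zero hlx fun h => hxc (hl x h)

lemma exists_isSkewRep (G : SimpleGraph V) : ∃ A, IsSkewRep G A := by
  let e := Fintype.equivFin V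
  refine ⟨of fun x y => if G.Adj x y then ((e y : ℕ) : ℝ) - (e x : ℕ) else 0, ?_,
    fun x y _ => ?_⟩
  · ext x y
    simp only [transpose_apply, Matrix.neg_apply, of_apply, G.adj_comm y x]
    split_ifs <;> ring
  · by_cases h : G.Adj x y
    · simpa [h, sub_eq_zero, e.injective.eq_iff, Fin.val_inj] using h.ne.symm
    · simp [h]

lemma minSkewRank_eq_of_forall_rank_eq {r : ℕ} (h : ∀ A, IsSkewRep G A → A.rank = r) :
    minSkewRank G = r := by
  obtain ⟨A, hA⟩ := exists_isSkewRep G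
  have : {r | ∃ A, IsSkewRep G A ∧ A.rank = r} = {r} :=
    Set.eq_singleton_iff_unique_mem.mpr ⟨⟨A, hA, h A hA⟩, fun _ ⟨B, hB, hr⟩ => hr ▸ h B hB⟩
  rw [minSkewRank, this, csInf_singleton]

/-- The row and the column of the leaf at `c` clear the row and the column of `c`. -/
theorem IsSkewRep.rank_eq_two_mul_ncard_compl_add_rank_induce (hA : IsSkewRep G A) (S : Set V)
    [Fintype S] (hpend : ∀ c ∉ S, ∃ l ∈ S, G.Adj l c ∧ ∀ y, G.Adj l y → y = c) :
    A.rank = 2 * Sᶜ.ncard + (A.submatrix ((↑) : S → V) ((↑) : S → V)).rank := by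
  have hsingle : ∀ {B : Matrix V V ℝ}, IsSkewRep G B → ∀ c ∉ S,
      Pi.single c 1 ∈ Submodule.span ℝ (Set.range (B.submatrix ((↑) : S → V) id).row) := by
    intro B hB c hc
    obtain ⟨l, hlS, hlc, hl⟩ := hpend c hc
    have : Pi.single c 1 = (B l c)⁻¹ • B.row l := by
      rw [hB.row_eq_single_of_pendant hl, ← Pi.single_smul, smul_eq_mul,
        inv_mul_cancel₀ (hB.apply_ne_zero hlc)]
    rw [this]
    exact Submodule.smul_mem _ _ (Submodule.subset_span ⟨⟨l, hlS⟩, rfl⟩)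
  calc A.rank = Sᶜ.ncard + (A.submatrix id ((↑) : S → V)).rank :=
        A.rank_eq_ncard_compl_add_rank_submatrix S fun c hc =>
          Submodule.span_mono (Set.range_comp_subset_range _ _) (hsingle hA c hc)
    _ = Sᶜ.ncard + (Aᵀ.submatrix ((↑) : S → V) id).rank := by
        rw [← rank_transpose, transpose_submatrix]
    _ = Sᶜ.ncard + (Sᶜ.ncard + (Aᵀ.submatrix ((↑) : S → V) ((↑) : S → V)).rank) := by
        rw [(Aᵀ.submatrix _ id).rank_eq_ncard_compl_add_rank_submatrix S (hsingle hA.transpose),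
          submatrix_submatrix]
        rfl
    _ = 2 * Sᶜ.ncard + (A.submatrix ((↑) : S → V) ((↑) : S → V)).rank := by
        rw [← transpose_submatrix, rank_transpose]
        ring

end SkewRep

section Matching

variable {V : Type*} [Fintype V] {G : SimpleGraph V}

lemma bddAbove_ncard_edgeSet_isMatching (G : SimpleGraph V) :
    BddAbove {n | ∃ M : G.Subgraph, M.IsMatching ∧ M.edgeSet.ncard = n} :=
  ⟨Nat.card (Sym2 V), by rintro _ ⟨M, -, rfl⟩; exact Set.ncard_le_card _⟩

lemma exists_isMatching_ncard_edgeSet_eq_matchNum (G : SimpleGraph V) :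
    ∃ M : G.Subgraph, M.IsMatching ∧ M.edgeSet.ncard = matchNum G :=
  Nat.sSup_mem ⟨0, show ∃ M : G.Subgraph, _ from ⟨⊥, fun _ hv => hv.elim, by simp⟩⟩
    (bddAbove_ncard_edgeSet_isMatching G)

lemma ncard_edgeSet_le_matchNum {M : G.Subgraph} (hM : M.IsMatching) :
    M.edgeSet.ncard ≤ matchNum G :=
  le_csSup (bddAbove_ncard_edgeSet_isMatching G) ⟨M, hM, rfl⟩

lemma matchNum_bot : matchNum (⊥ : SimpleGraph V) = 0 := by
  obtain ⟨M, -, hM⟩ := exists_isMatching_ncard_edgeSet_eq_matchNum (⊥ : SimpleGraph V)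
  rw [← hM, Set.ncard_eq_zero, ← Set.subset_empty_iff, ← SimpleGraph.edgeSet_bot]
  exact M.edgeSet_subset

lemma matchNum_induce_compl_singleton_add_one_le {l c : V} (hlc : G.Adj l c)
    (hl : ∀ y, G.Adj l y → y = c) : matchNum (G.induce {c}ᶜ) + 1 ≤ matchNum G := by
  obtain ⟨M, hM, hMcard⟩ := exists_isMatching_ncard_edgeSet_eq_matchNum (G.induce {c}ᶜ)
  set φ := (Embedding.induce ({c}ᶜ : Set V)).toHom
  have hφ : Function.Injective φ := Subtype.val_injective
  set N := M.map φ
  -- `l` is isolated in `G - c`, so `N` misses both ends of the edge `lc`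
  have hN : ∀ x ∈ N.verts, x ≠ l ∧ x ≠ c := by
    rintro _ ⟨x, hx, rfl⟩
    obtain ⟨y, hxy, -⟩ := hM hx
    exact ⟨fun hxl => y.2 (hl y (hxl ▸ M.adj_sub hxy)), x.2⟩
  have hdisj : Disjoint N.support (G.subgraphOfAdj hlc).support := by
    rw [(hM.map φ hφ).support_eq_verts, (Subgraph.IsMatching.subgraphOfAdj hlc).support_eq_verts,
      subgraphOfAdj_verts, Set.disjoint_left]
    rintro x hx (rfl | rfl)
    exacts [(hN x hx).1 rfl, (hN x hx).2 rfl]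
  have hcard : (N ⊔ G.subgraphOfAdj hlc).edgeSet.ncard = M.edgeSet.ncard + 1 := by
    rw [Subgraph.edgeSet_sup, edgeSet_subgraphOfAdj, Set.ncard_union_eq, Subgraph.edgeSet_map,
      Set.ncard_image_of_injective _ (Sym2.map.injective hφ), Set.ncard_singleton]
    exact Set.disjoint_singleton_right.mpr fun h => (hN l (N.edge_vert h)).1 rfl
  calc matchNum (G.induce {c}ᶜ) + 1 = (N ⊔ G.subgraphOfAdj hlc).edgeSet.ncard := by
        rw [hcard, hMcard]
    _ ≤ matchNum G :=
        ncard_edgeSet_le_matchNum ((hM.map φ hφ).sup (.subgraphOfAdj hlc) hdisj)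

lemma matchNum_le_matchNum_induce_compl_singleton_add_one (c : V) :
    matchNum G ≤ matchNum (G.induce {c}ᶜ) + 1 := by
  obtain ⟨M, hM, hMcard⟩ := exists_isMatching_ncard_edgeSet_eq_matchNum G
  let M' : (G.induce {c}ᶜ).Subgraph :=
    { verts := {x | ∃ y : ({c}ᶜ : Set V), M.Adj x y}
      Adj x y := M.Adj x y
      adj_sub h := M.adj_sub h
      edge_vert h := ⟨_, h⟩
      symm := ⟨fun _ _ h => h.symm⟩ }
  have hM' : M'.IsMatching := by
    rintro x ⟨y, hxy⟩
    exact ⟨y, hxy, fun z hz => Subtype.ext (hM.eq_of_adj_left hz hxy)⟩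
  set T := {e ∈ M.edgeSet | c ∈ e}
  have hT : T.ncard ≤ 1 := by
    refine (Set.ncard_le_one_iff (Set.toFinite _)).mpr fun ⟨he₁, hc₁⟩ ⟨he₂, hc₂⟩ => ?_
    obtain ⟨y₁, rfl⟩ := Sym2.mem_iff_exists.mp hc₁
    obtain ⟨y₂, rfl⟩ := Sym2.mem_iff_exists.mp hc₂
    rw [hM.eq_of_adj_left (M.mem_edgeSet.mp he₁) (M.mem_edgeSet.mp he₂)]
  have hsub : M.edgeSet \ T ⊆ Sym2.map (↑) '' M'.edgeSet := by
    rintro ⟨x, y⟩ ⟨hxy, hT⟩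
    have hx : x ∈ ({c}ᶜ : Set V) := fun h => hT ⟨hxy, h ▸ Sym2.mem_mk_left x y⟩
    have hy : y ∈ ({c}ᶜ : Set V) := fun h => hT ⟨hxy, h ▸ Sym2.mem_mk_right x y⟩
    exact ⟨s(⟨x, hx⟩, ⟨y, hy⟩), hxy, rfl⟩
  calc matchNum G = M.edgeSet.ncard := hMcard.symm
    _ ≤ (M.edgeSet \ T).ncard + T.ncard := Set.ncard_le_ncard_sdiff_add_ncard _ _
    _ ≤ M'.edgeSet.ncard + 1 := by
        gcongr
        exact (Set.ncard_le_ncard hsub).trans (Set.ncard_image_le (Set.toFinite _))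
    _ ≤ matchNum (G.induce {c}ᶜ) + 1 := by
        gcongr
        exact ncard_edgeSet_le_matchNum hM'

end Matching

namespace SimpleGraph

variable {V α : Type*} [LinearOrder α]

/-- The graphs admitting such a ranking are exactly the forests: rank each tree by decreasing
depth. -/
def IsForestRanking (G : SimpleGraph V) (h : V → α) : Prop :=
  ∀ x, {y | G.Adj x y ∧ h x ≤ h y}.Subsingleton

variable {G : SimpleGraph V} {h : V → α}

lemma IsForestRanking.induce (hG : G.IsForestRanking h) (s : Set V) :
    (G.induce s).IsForestRanking (h ∘ (↑)) :=
  fun x _ hy₁ _ hy₂ => Subtype.ext (hG x hy₁ hy₂)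

/-- A non-isolated vertex of least rank is a leaf. -/
lemma IsForestRanking.exists_pendant [Fintype V] (hG : G.IsForestRanking h) (hne : G ≠ ⊥) :
    ∃ l c, G.Adj l c ∧ ∀ y, G.Adj l y → y = c := by
  obtain ⟨a, b, hab⟩ := ne_bot_iff_exists_adj.mp hne
  obtain ⟨l, hl, hmin⟩ := Finset.exists_min_image
    (Finset.univ.filter fun x => ∃ y, G.Adj x y) h ⟨a, by simpa using ⟨b, hab⟩⟩
  obtain ⟨c, hlc⟩ := (Finset.mem_filter.mp hl).2
  have hup : ∀ y, G.Adj l y → y ∈ {y | G.Adj l y ∧ h l ≤ h y} :=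
    fun y hy => ⟨hy, hmin y (by simpa using ⟨l, hy.symm⟩)⟩
  exact ⟨l, c, hlc, fun y hy => hG l (hup y hy) (hup c hlc)⟩

end SimpleGraph

theorem IsSkewRep.rank_eq_two_mul_matchNum {V α : Type*} [Fintype V] [LinearOrder α]
    {G : SimpleGraph V} {A : Matrix V V ℝ} (hA : IsSkewRep G A) {h : V → α}
    (hG : G.IsForestRanking h) : A.rank = 2 * matchNum G := by
  induction hn : Nat.card V using Nat.strong_induction_on generalizing V with
  | _ n ih =>
  rcases eq_or_ne G ⊥ with rfl | hne
  · rw [hA.eq_zero_of_eq_bot rfl, rank_zero, matchNum_bot, mul_zero]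
  obtain ⟨l, c, hlc, hl⟩ := hG.exists_pendant hne
  have hlt : Nat.card ({c}ᶜ : Set V) < n :=
    hn ▸ Finite.card_subtype_lt (p := (· ∈ ({c}ᶜ : Set V))) (x := c) (by simp)
  have hpend : ∀ c' ∉ ({c}ᶜ : Set V), ∃ l ∈ ({c}ᶜ : Set V),
      G.Adj l c' ∧ ∀ y, G.Adj l y → y = c' := by
    intro c' hc'
    obtain rfl : c' = c := by simpa using hc'
    exact ⟨l, hlc.ne, hlc, hl⟩
  rw [hA.rank_eq_two_mul_ncard_compl_add_rank_induce {c}ᶜ hpend, compl_compl,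
    Set.ncard_singleton, ih _ hlt (hA.induce _) (hG.induce _) rfl,
    le_antisymm (matchNum_le_matchNum_induce_compl_singleton_add_one c)
      (matchNum_induce_compl_singleton_add_one_le hlc hl)]
  ring

lemma cycleGraph_eq_add_one_of_adj {n : ℕ} [NeZero n] {v a b : Fin n} (ha : a ≠ v)
    (hab : (cycleGraph n).Adj a b) (hle : (a - v).val ≤ (b - v).val) : b = a + 1 := by
  rcases cycleGraph_adj'.mp hab with h | h
  · exfalso
    have hav : (a - v).val ≠ 0 := Fin.val_ne_zero_iff.mpr (sub_ne_zero.mpr ha)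
    rw [show a - b = (a - v) - (b - v) by abel] at h
    rcases hle.lt_or_eq with hlt | heq
    · rw [Fin.coe_sub_iff_lt.mpr hlt] at h
      have := (b - v).isLt
      omega
    · rw [Fin.val_inj.mp heq, sub_self, Fin.val_zero] at h
      omega
  · refine sub_eq_iff_eq_add'.mp (Fin.ext ?_)
    have := (b - a).isLt
    rw [h, Fin.val_one', Nat.mod_eq_of_lt (by omega)]

section Dandelion

variable {n k : ℕ} {f : Fin k → Fin n} {p : Fin k → ℕ}

@[simp]
lemma dandelion_adj_inl_inl {a b : Fin n} :
    (dandelion n k f p).Adj (.inl a) (.inl b) ↔ (cycleGraph n).Adj a b := by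
  simp only [dandelion, fromRel_adj, ne_eq, Sum.inl.injEq, (cycleGraph n).adj_comm b a, or_self,
    and_iff_right_iff_imp]
  exact Adj.ne

@[simp]
lemma dandelion_adj_inl_inr {a : Fin n} {s : Σ i, Fin (p i)} :
    (dandelion n k f p).Adj (.inl a) (.inr s) ↔ a = f s.1 := by
  simp [dandelion]

@[simp]
lemma dandelion_adj_inr_inl {a : Fin n} {s : Σ i, Fin (p i)} :
    (dandelion n k f p).Adj (.inr s) (.inl a) ↔ a = f s.1 := by
  rw [adj_comm, dandelion_adj_inl_inr]

@[simp]
lemma dandelion_not_adj_inr_inr {s t : Σ i, Fin (p i)} :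
    ¬(dandelion n k f p).Adj (.inr s) (.inr t) := by
  simp [dandelion]

lemma dandelion_eq_of_adj_inr {s : Σ i, Fin (p i)} {y : Fin n ⊕ Σ i, Fin (p i)}
    (h : (dandelion n k f p).Adj (.inr s) y) : y = .inl (f s.1) := by
  rcases y with a | t
  · rw [dandelion_adj_inr_inl.mp h]
  · exact (dandelion_not_adj_inr_inr h).elim

lemma dandelion_induce_isForestRanking (i₀ : Fin k) :
    ((dandelion n k f p).induce {x | ∀ i, x ≠ .inl (f i)}).IsForestRanking
      fun x => Sum.elim (fun a => (a - f i₀).val) (fun _ => 0) x.1 := by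
  have : NeZero n := ⟨(f i₀).pos.ne'⟩
  set S : Set (Fin n ⊕ Σ i, Fin (p i)) := {x | ∀ i, x ≠ .inl (f i)}
  set r : Fin n ⊕ (Σ i, Fin (p i)) → ℕ := Sum.elim (fun a => (a - f i₀).val) (fun _ => 0)
  -- leaves are isolated once their centres are deleted, so every edge left is a cycle edge
  have hsucc : ∀ {x y}, x ∈ S → y ∈ S → (dandelion n k f p).Adj x y → r x ≤ r y →
      ∃ a, x = .inl a ∧ y = .inl (a + 1) := by
    rintro (a | s) (b | t) hx hy hxy hle
    · have hab : (cycleGraph n).Adj a b := by simpa using hxy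
      have ha : a ≠ f i₀ := fun h => hx i₀ (congrArg _ h)
      exact ⟨a, rfl, congrArg _ (cycleGraph_eq_add_one_of_adj ha hab hle)⟩
    · exact (hx t.1 (congrArg _ (dandelion_adj_inl_inr.mp hxy))).elim
    · exact (hy s.1 (congrArg _ (dandelion_adj_inr_inl.mp hxy))).elim
    · exact (dandelion_not_adj_inr_inr hxy).elim
  rintro ⟨x, hx⟩ ⟨y₁, hy₁⟩ ⟨hxy₁, hle₁⟩ ⟨y₂, hy₂⟩ ⟨hxy₂, hle₂⟩
  obtain ⟨a, rfl, rfl⟩ := hsucc hx hy₁ hxy₁ hle₁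
  obtain ⟨a', ha', rfl⟩ := hsucc hx hy₂ hxy₂ hle₂
  cases Sum.inl_injective ha'
  rfl

lemma dandelion_exists_pendant (hp : ∀ i, 1 ≤ p i) :
    ∀ c ∉ {x | ∀ i, x ≠ .inl (f i)}, ∃ l ∈ {x | ∀ i, x ≠ .inl (f i)},
      (dandelion n k f p).Adj l c ∧ ∀ y, (dandelion n k f p).Adj l y → y = c := by
  intro c hc
  obtain ⟨i, rfl⟩ : ∃ i, c = .inl (f i) := by simpa [eq_comm] using hc
  exact ⟨.inr ⟨i, 0, hp i⟩, by simp, by simp, fun _ => dandelion_eq_of_adj_inr⟩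

end Dandelion

theorem minSkewRank_dandelion_general (n k : ℕ) (hk : 1 ≤ k)
    (f : Fin k → Fin n) (hf : Function.Injective f)
    (p : Fin k → ℕ) (hp : ∀ i, 1 ≤ p i) :
    minSkewRank (dandelion n k f p) =
      2 * k + 2 * matchNum ((dandelion n k f p).induce
        {x | ∀ i : Fin k, x ≠ Sum.inl (f i)}) := by
  have hinj : Function.Injective fun i => (Sum.inl (f i) : Fin n ⊕ Σ i, Fin (p i)) :=
    Sum.inl_injective.comp hf
  refine minSkewRank_eq_of_forall_rank_eq fun A hA => ?_
  rw [hA.rank_eq_two_mul_ncard_compl_add_rank_induce _ (dandelion_exists_pendant hp),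
    Set.ncard_compl_setOf_forall_ne hinj, Nat.card_fin,
    (hA.induce _).rank_eq_two_mul_matchNum (dandelion_induce_isForestRanking ⟨0, hk⟩)]

/-- For a partial `n`-dandelion `U` with `k` cycle vertices carrying leaves,
`mr⁻(U) = 2k + 2·match(U - V')`, where `V'` is the set of cycle vertices
carrying leaves. -/
theorem minSkewRank_dandelion (n k : ℕ) (hn : 3 ≤ n) (hk : 1 ≤ k)
    (f : Fin k → Fin n) (hf : Function.Injective f)
    (p : Fin k → ℕ) (hp : ∀ i, 1 ≤ p i) :
    minSkewRank (dandelion n k f p) =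
      2 * k + 2 * matchNum ((dandelion n k f p).induce
        {x | ∀ i : Fin k, x ≠ Sum.inl (f i)}) :=
  minSkewRank_dandelion_general n k hk f hf p hp
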